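/- arXiv:0808.0647 — 2 statements merged into one kernel-verified Lean document; each statement's English description precedes it below -/
import Mathlib

section
/- Let B be a structure on the two-element domain {0,1} with canonical relation R_B (the product of all its relations), and suppose 0 is a ∀-canon and 1 is an ∃-canon, i.e., for every partition I|J of the coordinates of R_B and every instantiation of J, R_B with I set to 0 implies R_B with I set to 1. Then for every prenex sentence φ of positive equality-free first-order logic, B ⊨ φ if and only if B ⊨ φ[∀/0, ∃/1], where φ[∀/0, ∃/1] is the quantifier-free sentence obtained from φ by instantiating every universally quantified variable as 0 and every existentially quantified variable as 1. -/
/-- Quantifier-free positive equality-free formulas over a relational signature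
with `m` relation symbols of arities `ar`, with `n` free variables. -/
inductive BQF (m : ℕ) (ar : Fin m → ℕ) : ℕ → Type
  | atom {n : ℕ} (i : Fin m) (v : Fin (ar i) → Fin n) : BQF m ar n
  | conj {n : ℕ} (φ ψ : BQF m ar n) : BQF m ar n
  | disj {n : ℕ} (φ ψ : BQF m ar n) : BQF m ar n

/-- Prenex positive equality-free first-order formulas over the signature. -/
inductive BPFO (m : ℕ) (ar : Fin m → ℕ) : ℕ → Type
  | qf  {n : ℕ} (φ : BQF m ar n) : BPFO m ar n
  | ex  {n : ℕ} (φ : BPFO m ar (n + 1)) : BPFO m ar n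
  | all {n : ℕ} (φ : BPFO m ar (n + 1)) : BPFO m ar n

def BQF.eval {m : ℕ} {ar : Fin m → ℕ} {V : Type*} (R : ∀ i, (Fin (ar i) → V) → Prop) :
    {n : ℕ} → BQF m ar n → (Fin n → V) → Prop
  | _, .atom i v, ρ => R i (fun k => ρ (v k))
  | _, .conj φ ψ, ρ => φ.eval R ρ ∧ ψ.eval R ρ
  | _, .disj φ ψ, ρ => φ.eval R ρ ∨ ψ.eval R ρ

/-- Evaluation; `u = some x` (resp. `e = some y`) instantiates every universal
(resp. existential) variable as `x` (resp. `y`); `none` means genuine quantification. -/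
def BPFO.eval {m : ℕ} {ar : Fin m → ℕ} {V : Type*} (R : ∀ i, (Fin (ar i) → V) → Prop)
    (u e : Option V) : {n : ℕ} → BPFO m ar n → (Fin n → V) → Prop
  | _, .qf φ, ρ => φ.eval R ρ
  | _, .ex φ, ρ =>
      match e with
      | none => ∃ v, φ.eval R u e (Fin.snoc ρ v)
      | some y => φ.eval R u e (Fin.snoc ρ y)
  | _, .all φ, ρ =>
      match u with
      | none => ∀ v, φ.eval R u e (Fin.snoc ρ v)
      | some x => φ.eval R u e (Fin.snoc ρ x)

def BPFO.Sat {m : ℕ} {ar : Fin m → ℕ} {V : Type*} (R : ∀ i, (Fin (ar i) → V) → Prop)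
    (u e : Option V) (φ : BPFO m ar 0) : Prop :=
  φ.eval R u e (fun i => i.elim0)

/-- The canonical relation `R_B`: the product of all relations of `B`, a relation
on tuples indexed by the disjoint union of the coordinate positions. -/
def canonRel {m : ℕ} {ar : Fin m → ℕ} {V : Type*} (R : ∀ i, (Fin (ar i) → V) → Prop)
    (t : (Σ i : Fin m, Fin (ar i)) → V) : Prop :=
  ∀ i, R i (fun k => t ⟨i, k⟩)

/-!
The canon condition, applied to a tuple that carries a witness in every other relation, says
that every relation of `B` is upward closed in the order `0 ≤ 1`. Positive formulas are then
monotone in their assignment, so an existential quantifier is witnessed by the top element `1`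
and a universal one is decided by the bottom element `0`.
-/

section

variable {m : ℕ} {ar : Fin m → ℕ} {V : Type*}

theorem Fin.snoc_le_snoc [Preorder V] {n : ℕ} {ρ ρ' : Fin n → V} {v v' : V}
    (hρ : ρ ≤ ρ') (hv : v ≤ v') : (Fin.snoc ρ v : Fin (n + 1) → V) ≤ Fin.snoc ρ' v' :=
  (Fin.snocOrderIso fun _ => V).monotone (Prod.mk_le_mk.2 ⟨hv, hρ⟩)

section Monotone

variable [Preorder V] {R : ∀ i, (Fin (ar i) → V) → Prop}

theorem BQF.eval_monotone (hR : ∀ i, Monotone (R i)) :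
    ∀ {n : ℕ} (φ : BQF m ar n), Monotone (φ.eval R)
  | _, .atom i v, _, _, h => by
      simp only [BQF.eval]
      exact hR i fun k => h (v k)
  | _, .conj φ ψ, _, _, h => by
      simp only [BQF.eval]
      exact And.imp (φ.eval_monotone hR h) (ψ.eval_monotone hR h)
  | _, .disj φ ψ, _, _, h => by
      simp only [BQF.eval]
      exact Or.imp (φ.eval_monotone hR h) (ψ.eval_monotone hR h)

theorem BPFO.eval_monotone (hR : ∀ i, Monotone (R i)) (u e : Option V) :
    ∀ {n : ℕ} (φ : BPFO m ar n), Monotone (φ.eval R u e)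
  | _, .qf φ, _, _, h => φ.eval_monotone hR h
  | _, .ex φ, _, _, h => by
      cases e with
      | none => exact Exists.imp fun v => φ.eval_monotone hR u none (Fin.snoc_le_snoc h le_rfl)
      | some y => exact φ.eval_monotone hR u (some y) (Fin.snoc_le_snoc h le_rfl)
  | _, .all φ, _, _, h => by
      cases u with
      | none => exact forall_imp fun v => φ.eval_monotone hR none e (Fin.snoc_le_snoc h le_rfl)
      | some x => exact φ.eval_monotone hR (some x) e (Fin.snoc_le_snoc h le_rfl)

theorem BPFO.eval_none_none_iff [BoundedOrder V] (hR : ∀ i, Monotone (R i)) :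
    ∀ {n : ℕ} (φ : BPFO m ar n) (ρ : Fin n → V),
      φ.eval R none none ρ ↔ φ.eval R (some ⊥) (some ⊤) ρ
  | _, .qf _, _ => Iff.rfl
  | _, .ex φ, _ =>
      ⟨fun ⟨_, hv⟩ => φ.eval_monotone hR _ _ (Fin.snoc_le_snoc le_rfl le_top)
          ((φ.eval_none_none_iff hR _).1 hv),
        fun h => ⟨⊤, (φ.eval_none_none_iff hR _).2 h⟩⟩
  | _, .all φ, _ =>
      ⟨fun h => (φ.eval_none_none_iff hR _).1 (h ⊥),
        fun h _ => (φ.eval_none_none_iff hR _).2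
          (φ.eval_monotone hR _ _ (Fin.snoc_le_snoc le_rfl bot_le) h)⟩

end Monotone

theorem canonRel_uncurry (R : ∀ i, (Fin (ar i) → V) → Prop) (f : ∀ i, Fin (ar i) → V) :
    canonRel R (Sigma.uncurry f) ↔ ∀ i, R i (f i) :=
  Iff.rfl

theorem monotone_of_canon {R : ∀ i, (Fin (ar i) → Bool) → Prop} (hne : ∀ i, ∃ t, R i t)
    (hcanon : ∀ (t p : (Σ i : Fin m, Fin (ar i)) → Bool),
      canonRel R (fun c => if p c then false else t c) →
        canonRel R (fun c => if p c then true else t c))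
    (i : Fin m) : Monotone (R i) := by
  intro a a' hle ha
  choose w hw using hne
  -- `p` marks the coordinates of `a' \ a` in block `i`: lowering them leaves `a`, raising them gives `a'`
  let t := Sigma.uncurry (Function.update w i a)
  let p := Sigma.uncurry (Function.update (fun j (_ : Fin (ar j)) => false) i fun k => a' k && !a k)
  have hlow : (fun c => if p c then false else t c) = t := by
    funext ⟨j, k⟩
    rcases eq_or_ne j i with rfl | hj
    · cases h : a k <;> simp [t, p, Sigma.uncurry, h]
    · simp [t, p, Sigma.uncurry, hj]
  have hup : (fun c => if p c then true else t c) = Sigma.uncurry (Function.update w i a') := by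
    funext ⟨j, k⟩
    rcases eq_or_ne j i with rfl | hj
    · have hk := hle k
      simp only [t, p, Sigma.uncurry, Function.update_self]
      revert hk
      cases a k <;> cases a' k <;> simp [Bool.le_iff_imp]
    · simp [t, p, Sigma.uncurry, hj]
  have hcan := hcanon t p
  rw [hlow, hup, canonRel_uncurry, canonRel_uncurry] at hcan
  have ht : ∀ j, R j (Function.update w i a j) :=
    (Function.forall_update_iff w fun j => R j).2 ⟨ha, fun j _ => hw j⟩
  simpa using hcan ht i

end

/-- let `B` be a boolean structure (domain `Bool`, with `false = 0`
and `true = 1`) with no empty relations, and suppose `0` is a ∀-canon and `1` an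
∃-canon: for every partition of the coordinates of the canonical relation `R_B`
(given by `p`) and every instantiation `t` of the remaining coordinates, `R_B`
with the `p`-coordinates set to `0` implies `R_B` with them set to `1`.  Then a
prenex positive equality-free sentence `φ` holds in `B` iff the quantifier-free
sentence `φ[∀/0, ∃/1]` holds in `B`. -/
theorem stmt0 {m : ℕ} {ar : Fin m → ℕ} (R : ∀ i, (Fin (ar i) → Bool) → Prop)
    (hne : ∀ i, ∃ t, R i t)
    (hcanon : ∀ (t p : (Σ i : Fin m, Fin (ar i)) → Bool),
      canonRel R (fun c => if p c then false else t c) →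
        canonRel R (fun c => if p c then true else t c)) :
    ∀ φ : BPFO m ar 0,
      BPFO.Sat R none none φ ↔ BPFO.Sat R (some false) (some true) φ :=
  fun φ => φ.eval_none_none_iff (monotone_of_canon hne hcanon) _
end

section
/- Let B be a boolean structure with canonical relation R_B such that ¬R_B(0,...,0), R_B(1,...,1), and 0 is not a ∀-canon. Then there exists a binary relation R''' on {0,1}, positively definable from R_B by identifying coordinates, substituting the constant tuple feasibility condition R_B(v,...,v), and closing under conjunction and coordinate swap, such that R''' = {(0,0),(1,1)}. Concretely: there is a three-part coordinate identification R'(v_I,v_{J₀},v_{J₁}) of R_B with (1,1,1),(0,0,1) ∈ R' and (0,0,0),(1,0,1) ∉ R'; setting R''(v_I,v_{J₀}) := R'(v_I,v_{J₀},1), guarded by R_B(1,...,1), yields (0,0),(1,1) ∈ R'' and (1,0) ∉ R'', and R'''(x,y) := R''(x,y) ∧ R''(y,x) equals {(0,0),(1,1)}. -/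
/-- let `RB` be the canonical relation (arity `r`, on `Bool`, with
`false = 0` and `true = 1`) of a boolean structure with `¬R_B(0,…,0)`,
`R_B(1,…,1)`, and such that `0` is not a ∀-canon (witnessed by a coordinate
partition `p` and an instantiation `w`).  Then there is a three-part coordinate
identification `f : Fin r → Fin 3` (into parts `I`, `J₀`, `J₁`, all nonempty,
i.e. `f` surjective) such that, writing `R'(x,y,z) := RB` with the `I`-, `J₀`-,
`J₁`-coordinates identified as `x`, `y`, `z`:
`(1,1,1), (0,0,1) ∈ R'` and `(0,0,0), (1,0,1) ∉ R'`; the guarded relation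
`R''(x,y) := ∃ z, RB(z,…,z) ∧ R'(x,y,z)` contains `(0,0)` and `(1,1)` but not
`(1,0)`; and `R'''(x,y) := R''(x,y) ∧ R''(y,x)` equals `{(0,0), (1,1)}`. -/
theorem stmt15 (r : ℕ) (RB : (Fin r → Bool) → Prop)
    (h0 : ¬ RB (fun _ => false)) (h1 : RB (fun _ => true))
    (hnc : ∃ p w : Fin r → Bool,
      (RB fun i => if p i then false else w i) ∧ ¬ (RB fun i => if p i then true else w i)) :
    ∃ f : Fin r → Fin 3, Function.Surjective f ∧
      (fun R' : Bool → Bool → Bool → Prop =>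
        R' true true true ∧ R' false false true ∧
        ¬ R' false false false ∧ ¬ R' true false true ∧
        (fun R'' : Bool → Bool → Prop =>
          R'' false false ∧ R'' true true ∧ ¬ R'' true false ∧
          ∀ x y : Bool, (R'' x y ∧ R'' y x) ↔ x = y)
          (fun x y => ∃ z : Bool, RB (fun _ => z) ∧ R' x y z))
        (fun x y z => RB fun i => ![x, y, z] (f i)) := by
  obtain ⟨p, w, hpw1, hpw2⟩ := hnc
  set f : Fin r → Fin 3 := fun i => if p i then 0 else if w i then 2 else 1 with hf
  have key : ∀ x y z : Bool,
      (fun i => ![x, y, z] (f i)) = (fun i => if p i then x else if w i then z else y) := by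
    intro x y z
    funext i
    simp only [hf]
    split_ifs <;> rfl
  -- R' facts
  have hA : RB fun i => ![true, true, true] (f i) := by
    rw [key]
    have : (fun i => if p i then true else if w i then true else true) = fun _ : Fin r => true := by
      funext i; split_ifs <;> rfl
    rw [this]; exact h1
  have hB : RB fun i => ![false, false, true] (f i) := by
    rw [key]
    have : (fun i => if p i then false else if w i then true else false)
        = fun i => if p i then false else w i := by
      funext i
      by_cases hp : p i
      · simp [hp]
      · cases hw : w i <;> simp [hp, hw]
    rw [this]; exact hpw1
  have hC : ¬ RB fun i => ![false, false, false] (f i) := by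
    rw [key]
    have : (fun i => if p i then false else if w i then false else false)
        = fun _ : Fin r => false := by
      funext i; split_ifs <;> rfl
    rw [this]; exact h0
  have hD : ¬ RB fun i => ![true, false, true] (f i) := by
    rw [key]
    have : (fun i => if p i then true else if w i then true else false)
        = fun i => if p i then true else w i := by
      funext i
      by_cases hp : p i
      · simp [hp]
      · cases hw : w i <;> simp [hp, hw]
    rw [this]; exact hpw2
  have hsurj : Function.Surjective f := by
    intro j
    fin_cases j
    · -- need i with p i = true
      by_contra h
      push_neg at h
      have hp : ∀ i, p i = false := by
        intro i
        cases hpi : p i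
        · rfl
        · exact absurd (by simp [hf, hpi] : f i = 0) (by
            have := h i
            simpa [hf, hpi] using this)
      apply hpw2
      have e1 : (fun i => if p i then true else w i) = w := by funext i; simp [hp i]
      have e2 : (fun i => if p i then false else w i) = w := by funext i; simp [hp i]
      rw [e1]; rw [e2] at hpw1; exact hpw1
    · -- need i with ¬ p i ∧ ¬ w i (value 1)
      by_contra h
      push_neg at h
      apply hpw2
      have e : (fun i => if p i then true else w i) = fun _ : Fin r => true := by
        funext i
        by_cases hp : p i
        · simp [hp]
        · cases hw : w i
          · exact absurd (by simp [hf, hp, hw] : f i = 1) (by simpa using h i)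
          · simp [hp, hw]
      rw [e]; exact h1
    · -- need i with ¬ p i ∧ w i (value 2)
      by_contra h
      push_neg at h
      apply h0
      have e : (fun i => if p i then false else w i) = fun _ : Fin r => false := by
        funext i
        by_cases hp : p i
        · simp [hp]
        · cases hw : w i
          · simp [hp, hw]
          · exact absurd (by simp [hf, hp, hw] : f i = 2) (by simpa using h i)
      rw [e] at hpw1; exact hpw1
  refine ⟨f, hsurj, hA, hB, hC, hD, ⟨true, h1, hB⟩, ⟨true, h1, hA⟩, ?_, ?_⟩
  · rintro ⟨z, hz1, hz2⟩
    cases z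
    · exact h0 hz1
    · exact hD hz2
  · intro x y
    constructor
    · rintro ⟨⟨z1, hz11, hz12⟩, ⟨z2, hz21, hz22⟩⟩
      cases x <;> cases y <;> first
        | rfl
        | · exfalso
            cases z1 <;> cases z2 <;> first
              | exact h0 hz11
              | exact h0 hz21
              | exact hD hz12
              | exact hD hz22
    · rintro rfl
      cases x
      · exact ⟨⟨true, h1, hB⟩, ⟨true, h1, hB⟩⟩
      · exact ⟨⟨true, h1, hA⟩, ⟨true, h1, hA⟩⟩
end
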